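/- Let A_sq be the adjacency matrix of the 4-cycle on nodes {1,2,3,4} with edges {1,2},{1,3},{2,4},{3,4} (so A_sq = [[0,1,1,0],[1,0,0,1],[1,0,0,1],[0,1,1,0]]), take O = 1, X = (1+A_sq²)^{-1/2}, Y = A_sq(1+A_sq²)^{-1/2}, S = fromBlocks X (−Y) Y X, and for s > 0 let Γ = S · Γ_sqz(4,s) · Sᵀ. Set κ = (s²−1)/(5s). Then, in quadrature ordering (Q₁,Q₂,Q₃,Q₄,P₁,P₂,P₃,P₄): for every node i, Γ[Q_i,Q_i] = 3s/5 + 2/(5s), Γ[P_i,P_i] = 2s/5 + 3/(5s), and Γ[Q_i,P_i] = 0; for every adjacent pair i ~ j, Γ[Q_i,P_j] = κ, Γ[Q_i,Q_j] = 0, and Γ[P_i,P_j] = 0; for the two non-adjacent pairs {1,4} and {2,3}, Γ[Q_i,Q_j] = −2κ, Γ[P_i,P_j] = 2κ, and Γ[Q_i,P_j] = 0. -/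

import Mathlib

/-!
Write `C = (1 + A²)⁻¹` and `X = (1 + A²)^{-1/2}`: `X` is symmetric with `X² = C`, so
`S Γ_sqz Sᵀ` has blocks `s C + s⁻¹ A C A`, `s C A - s⁻¹ A C`, `s A C - s⁻¹ C A` and
`s A C A + s⁻¹ C`, and the square root never has to be computed. The 4-cycle has spectrum
`{2, -2, 0, 0}`, i.e. `A³ = 4 A`; hence `C = 1 - A²/5` and `A C = C A = A/5`, and every entry
is read off from `A` and `A² = 2 (1 + J)`, where `J` exchanges the two nodes of each
non-adjacent pair.
-/

open Matrix

noncomputable section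

/-- For a real symmetric matrix `A`, the matrix `1 + A²` is positive definite. -/
theorem onePlusSq_posDef {n : ℕ} (A : Matrix (Fin n) (Fin n) ℝ) (hA : Aᵀ = A) :
    (1 + A * A).PosDef := by
  have h2 : (A * A).PosSemidef := by
    have h := Matrix.posSemidef_conjTranspose_mul_self A
    simpa [Matrix.conjTranspose_eq_transpose_of_trivial, hA] using h
  exact Matrix.PosDef.add_posSemidef Matrix.PosDef.one h2

section OldSqrt

open scoped ComplexOrder

/-- The square root of a positive semidefinite matrix, as defined in the older Mathlib
(removed since). -/
def Matrix.PosSemidef.sqrt {n 𝕜 : Type*} [Fintype n] [DecidableEq n] [RCLike 𝕜]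
    {A : Matrix n n 𝕜} (hA : A.PosSemidef) : Matrix n n 𝕜 :=
  hA.1.eigenvectorUnitary.1 * diagonal ((↑) ∘ (√·) ∘ hA.1.eigenvalues) *
    (star hA.1.eigenvectorUnitary : Matrix n n 𝕜)

end OldSqrt

/-- `(1 + A²)^{-1/2}`: the inverse of the unique positive-definite square root of `1 + A²`. -/
def invSqrtOnePlusSq {n : ℕ} (A : Matrix (Fin n) (Fin n) ℝ) (hA : Aᵀ = A) :
    Matrix (Fin n) (Fin n) ℝ :=
  ((onePlusSq_posDef A hA).posSemidef.sqrt)⁻¹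

/-- Covariance matrix `diag(s,…,s,s⁻¹,…,s⁻¹)` of `n` equally squeezed vacuum modes. -/
def GammaSqz (n : ℕ) (s : ℝ) : Matrix (Fin n ⊕ Fin n) (Fin n ⊕ Fin n) ℝ :=
  Matrix.fromBlocks (s • 1) 0 0 (s⁻¹ • 1)

/-- Adjacency matrix of the 4-cycle with edges {1,2},{1,3},{2,4},{3,4}. -/
def Asq : Matrix (Fin 4) (Fin 4) ℝ := !![0,1,1,0; 1,0,0,1; 1,0,0,1; 0,1,1,0]

theorem Asq_symm : Asqᵀ = Asq := by
  ext i j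
  fin_cases i <;> fin_cases j <;> simp [Asq, Matrix.transpose_apply]

/-- Covariance matrix of the square cluster state built with squeezing `s`. -/
def GammaSquare (s : ℝ) : Matrix (Fin 4 ⊕ Fin 4) (Fin 4 ⊕ Fin 4) ℝ :=
  Matrix.fromBlocks (invSqrtOnePlusSq Asq Asq_symm) (-(Asq * invSqrtOnePlusSq Asq Asq_symm))
      (Asq * invSqrtOnePlusSq Asq Asq_symm) (invSqrtOnePlusSq Asq Asq_symm) *
    GammaSqz 4 s *
    (Matrix.fromBlocks (invSqrtOnePlusSq Asq Asq_symm) (-(Asq * invSqrtOnePlusSq Asq Asq_symm))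
        (Asq * invSqrtOnePlusSq Asq Asq_symm) (invSqrtOnePlusSq Asq Asq_symm))ᵀ

namespace Matrix.PosSemidef

open scoped ComplexOrder

variable {n 𝕜 : Type*} [Fintype n] [DecidableEq n] [RCLike 𝕜] {A : Matrix n n 𝕜}

theorem sqrt_mul_self (hA : A.PosSemidef) : hA.sqrt * hA.sqrt = A := by
  set U : Matrix n n 𝕜 := hA.1.eigenvectorUnitary.1
  have hU : star U * U = 1 := Unitary.coe_star_mul_self _
  conv_rhs => rw [hA.1.spectral_theorem, Unitary.conjStarAlgAut_apply]
  calc hA.sqrt * hA.sqrt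
      = U * (diagonal ((↑) ∘ (√·) ∘ hA.1.eigenvalues) * (star U * U) *
          diagonal ((↑) ∘ (√·) ∘ hA.1.eigenvalues)) * star U := by
        simp only [sqrt, U, Matrix.mul_assoc]
    _ = _ := by
      rw [hU, Matrix.mul_one, diagonal_mul_diagonal]
      congr 3
      funext i
      simp only [Function.comp_apply, ← RCLike.ofReal_mul,
        Real.mul_self_sqrt (hA.eigenvalues_nonneg i)]

theorem isHermitian_sqrt (hA : A.PosSemidef) : hA.sqrt.IsHermitian := by
  simp only [IsHermitian, sqrt, conjTranspose_mul, diagonal_conjTranspose, star_eq_conjTranspose,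
    conjTranspose_conjTranspose, Matrix.mul_assoc]
  congr 3
  funext i
  simp [RCLike.star_def]

end Matrix.PosSemidef

section InvSqrtOnePlusSq

variable {n : ℕ} (A : Matrix (Fin n) (Fin n) ℝ) (hA : Aᵀ = A)

theorem invSqrtOnePlusSq_transpose : (invSqrtOnePlusSq A hA)ᵀ = invSqrtOnePlusSq A hA := by
  have h := (onePlusSq_posDef A hA).posSemidef.isHermitian_sqrt
  rw [invSqrtOnePlusSq, transpose_nonsing_inv, ← conjTranspose_eq_transpose_of_trivial, h]

theorem invSqrtOnePlusSq_mul_self :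
    invSqrtOnePlusSq A hA * invSqrtOnePlusSq A hA = (1 + A * A)⁻¹ := by
  rw [invSqrtOnePlusSq, ← Matrix.mul_inv_rev, Matrix.PosSemidef.sqrt_mul_self]

end InvSqrtOnePlusSq

theorem fromBlocks_mul_GammaSqz_mul_transpose {n : ℕ} (X A : Matrix (Fin n) (Fin n) ℝ)
    (hX : Xᵀ = X) (hA : Aᵀ = A) (s : ℝ) :
    fromBlocks X (-(A * X)) (A * X) X * GammaSqz n s * (fromBlocks X (-(A * X)) (A * X) X)ᵀ =
      fromBlocks (s • (X * X) + s⁻¹ • (A * (X * X) * A)) (s • (X * X * A) - s⁻¹ • (A * (X * X)))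
        (s • (A * (X * X)) - s⁻¹ • (X * X * A)) (s • (A * (X * X) * A) + s⁻¹ • (X * X)) := by
  simp [GammaSqz, fromBlocks_transpose, fromBlocks_multiply, transpose_mul, hX, hA,
    Matrix.mul_assoc, sub_eq_add_neg]

section CubeRelation

variable {ι K : Type*} [Fintype ι] [DecidableEq ι] [Field K] {A : Matrix ι ι K} {c : K}

theorem inv_one_add_mul_self_of_cube (hA : A * A * A = c • A) (hc : 1 + c ≠ 0) :
    (1 + A * A)⁻¹ = 1 - (1 + c)⁻¹ • (A * A) := by
  refine inv_eq_right_inv ?_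
  have hA4 : A * A * (A * A) = c • (A * A) := by rw [← Matrix.mul_assoc, hA, Matrix.smul_mul]
  simp only [Matrix.add_mul, Matrix.mul_sub, Matrix.mul_smul, hA4, Matrix.one_mul, Matrix.mul_one]
  match_scalars
  · rfl
  · rw [mul_one, inv_mul_cancel₀ hc, sub_self]

theorem mul_inv_one_add_mul_self_of_cube (hA : A * A * A = c • A) (hc : 1 + c ≠ 0) :
    A * (1 + A * A)⁻¹ = (1 + c)⁻¹ • A := by
  rw [inv_one_add_mul_self_of_cube hA hc, Matrix.mul_sub, Matrix.mul_smul, ← Matrix.mul_assoc, hA,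
    Matrix.mul_one]
  match_scalars
  field_simp
  ring

theorem inv_one_add_mul_self_mul_of_cube (hA : A * A * A = c • A) (hc : 1 + c ≠ 0) :
    (1 + A * A)⁻¹ * A = (1 + c)⁻¹ • A := by
  rw [inv_one_add_mul_self_of_cube hA hc, Matrix.sub_mul, Matrix.smul_mul, hA, Matrix.one_mul]
  match_scalars
  field_simp
  ring

end CubeRelation

section Square

theorem Asq_mul_self : Asq * Asq = !![2,0,0,2; 0,2,2,0; 0,2,2,0; 2,0,0,2] := by
  ext i j
  fin_cases i <;> fin_cases j <;> simp [Asq, mul_apply, Fin.sum_univ_four, one_add_one_eq_two]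

theorem Asq_mul_self_mul_self : Asq * Asq * Asq = (4 : ℝ) • Asq := by
  rw [Asq_mul_self]
  ext i j
  fin_cases i <;> fin_cases j <;> simp [Asq, mul_apply, Fin.sum_univ_four] <;> norm_num

theorem GammaSquare_eq (s : ℝ) :
    GammaSquare s =
      fromBlocks (s • 1 + ((s⁻¹ - s) / 5) • (Asq * Asq)) (((s - s⁻¹) / 5) • Asq)
        (((s - s⁻¹) / 5) • Asq) (s⁻¹ • 1 + ((s - s⁻¹) / 5) • (Asq * Asq)) := by
  have h5 : (1 + 4 : ℝ) ≠ 0 := by norm_num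
  rw [GammaSquare, fromBlocks_mul_GammaSqz_mul_transpose _ _ (invSqrtOnePlusSq_transpose _ _)
    Asq_symm, invSqrtOnePlusSq_mul_self, Matrix.mul_assoc,
    inv_one_add_mul_self_mul_of_cube Asq_mul_self_mul_self h5,
    mul_inv_one_add_mul_self_of_cube Asq_mul_self_mul_self h5,
    inv_one_add_mul_self_of_cube Asq_mul_self_mul_self h5]
  simp only [Matrix.mul_smul]
  congr 1 <;> match_scalars <;> ring

variable {i j : Fin 4}

theorem Asq_apply_self : Asq i i = 0 := by
  fin_cases i <;> simp [Asq]

theorem ne_of_Asq_eq_one (h : Asq i j = 1) : i ≠ j := by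
  rintro rfl
  simp [Asq_apply_self] at h

theorem Asq_mul_self_apply_self : (Asq * Asq) i i = 2 := by
  fin_cases i <;> simp [Asq_mul_self]

theorem Asq_mul_self_apply_of_adj (h : Asq i j = 1) : (Asq * Asq) i j = 0 := by
  rw [Asq_mul_self]
  fin_cases i <;> fin_cases j <;> simp_all [Asq]

theorem Asq_mul_self_apply_of_not_adj (hne : i ≠ j) (h : Asq i j = 0) : (Asq * Asq) i j = 2 := by
  rw [Asq_mul_self]
  fin_cases i <;> fin_cases j <;> simp_all [Asq]

end Square

/-- Entries of the covariance matrix of the square cluster state, with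
`κ = (s²−1)/(5s)`: diagonal variances, vanishing `Q_i P_i` covariances, `Q_i P_j = κ`
for adjacent pairs, and `Q_i Q_j = −2κ`, `P_i P_j = 2κ` for non-adjacent pairs. -/
theorem square_cluster_covariances (s : ℝ) (hs : 0 < s) :
    (∀ i : Fin 4, GammaSquare s (Sum.inl i) (Sum.inl i) = 3 * s / 5 + 2 / (5 * s)) ∧
    (∀ i : Fin 4, GammaSquare s (Sum.inr i) (Sum.inr i) = 2 * s / 5 + 3 / (5 * s)) ∧
    (∀ i : Fin 4, GammaSquare s (Sum.inl i) (Sum.inr i) = 0) ∧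
    (∀ i j : Fin 4, Asq i j = 1 →
      GammaSquare s (Sum.inl i) (Sum.inr j) = (s ^ 2 - 1) / (5 * s) ∧
      GammaSquare s (Sum.inl i) (Sum.inl j) = 0 ∧
      GammaSquare s (Sum.inr i) (Sum.inr j) = 0) ∧
    (∀ i j : Fin 4, i ≠ j → Asq i j = 0 →
      GammaSquare s (Sum.inl i) (Sum.inl j) = -2 * ((s ^ 2 - 1) / (5 * s)) ∧
      GammaSquare s (Sum.inr i) (Sum.inr j) = 2 * ((s ^ 2 - 1) / (5 * s)) ∧
      GammaSquare s (Sum.inl i) (Sum.inr j) = 0) := by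
  have hs0 : s ≠ 0 := hs.ne'
  simp only [GammaSquare_eq, fromBlocks_apply₁₁, fromBlocks_apply₁₂, fromBlocks_apply₂₂,
    Matrix.add_apply, Matrix.smul_apply, smul_eq_mul]
  refine ⟨fun i ↦ ?_, fun i ↦ ?_, fun i ↦ ?_, fun i j hij ↦ ?_, fun i j hne hij ↦ ?_⟩
  · rw [one_apply_eq, Asq_mul_self_apply_self]
    field_simp
    ring
  · rw [one_apply_eq, Asq_mul_self_apply_self]
    field_simp
    ring
  · rw [Asq_apply_self, mul_zero]
  · rw [hij, one_apply_ne (ne_of_Asq_eq_one hij), Asq_mul_self_apply_of_adj hij]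
    refine ⟨?_, by ring, by ring⟩
    field_simp
  · rw [hij, one_apply_ne hne, Asq_mul_self_apply_of_not_adj hne hij]
    refine ⟨?_, ?_, by ring⟩ <;> field_simp <;> ring
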